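/- Let p and q be perfect paths in a monomial algebra Λ. (1) If p is a proper left divisor of q, i.e., q = pr with r a nontrivial path, then r is a perfect path. (2) If q is a proper right divisor of p, i.e., p = rq with r nontrivial, then r is a perfect path. -/

import Mathlib

/-! Combinatorial model of a monomial algebra `Λ = KQ/I`.

A finite quiver is given by source and target maps on a type of arrows.
A (nontrivial) path is encoded as a nonempty list of composable arrows;
the admissible monomial ideal `I` is encoded by its set `F` of minimal
generating paths, and a path is zero in `Λ` iff it contains a member of
`F` as a contiguous subpath (infix). -/

/-- A quiver structure on arrow type `E` with vertex type `V`. -/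
structure QuiverData (V E : Type) where
  src : E → V
  tgt : E → V

namespace QuiverData

variable {V E : Type} (Q : QuiverData V E)

/-- `l` is the list of arrows of a path of `Q`. -/
def IsPath (l : List E) : Prop := l.Chain' fun a b => Q.tgt a = Q.src b

/-- Two paths are composable: the target of the first equals the source of
the second (vacuously true if one of them is trivial). -/
def Composable (l m : List E) : Prop :=
  ∀ a ∈ l.getLast?, ∀ b ∈ m.head?, Q.tgt a = Q.src b

end QuiverData

/-- A monomial algebra, encoded combinatorially: a finite quiver together with
the set `F` of minimal paths generating the admissible monomial ideal `I`. -/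
structure MonomialData (V E : Type) extends QuiverData V E where
  F : Set (List E)
  F_path : ∀ f ∈ F, toQuiverData.IsPath f
  F_len : ∀ f ∈ F, 2 ≤ f.length
  F_min : ∀ f ∈ F, ∀ g, g <:+: f → (∃ f' ∈ F, f' <:+: g) → g = f
  admissible : ∃ N, ∀ l, toQuiverData.IsPath l → N ≤ l.length → ∃ f ∈ F, f <:+: l

namespace MonomialData

variable {V E : Type} (M : MonomialData V E)

/-- The path `l` is zero in `Λ`. -/
def IsZero (l : List E) : Prop := ∃ f ∈ M.F, f <:+: l

/-- `l` is a path which is nonzero in `Λ`. -/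
def Nonzero (l : List E) : Prop := M.toQuiverData.IsPath l ∧ ¬ M.IsZero l

/-- A perfect pair of nonzero nontrivial paths, after Chen–Shen–Zhou. -/
def PerfectPair (p q : List E) : Prop :=
  p ≠ [] ∧ q ≠ [] ∧ M.Nonzero p ∧ M.Nonzero q ∧
  M.toQuiverData.Composable p q ∧ M.IsZero (p ++ q) ∧
  (∀ q', q' ≠ [] → M.Nonzero q' → M.toQuiverData.Composable p q' →
      M.IsZero (p ++ q') → q <+: q') ∧
  (∀ p', p' ≠ [] → M.Nonzero p' → M.toQuiverData.Composable p' q →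
      M.IsZero (p' ++ q) → p <:+ p')

/-- A perfect path: a path appearing in a perfect path sequence
`(p₁, …, pₙ, pₙ₊₁ = p₁)`, encoded by a periodic sequence of paths each of
whose consecutive pairs is perfect. -/
def IsPerfect (p : List E) : Prop :=
  ∃ (n : ℕ) (s : ℕ → List E), 0 < n ∧ s 0 = p ∧ (∀ i, s (i + n) = s i) ∧
    ∀ i, M.PerfectPair (s i) (s (i + 1))

/-- `c` is the underlying cycle associated with the perfect path `p`:
the shortest cycle `c` with `p₁ ⋯ pₙ = cˡ` for some `l > 0`, for a perfect
path sequence through `p`. -/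
def IsUnderlyingCycleOf (c p : List E) : Prop :=
  ∃ (n : ℕ) (s : ℕ → List E), 0 < n ∧ s 0 = p ∧ (∀ i, s (i + n) = s i) ∧
    (∀ i, M.PerfectPair (s i) (s (i + 1))) ∧
    (∃ l, 0 < l ∧ ((List.range n).map s).flatten = (List.replicate l c).flatten) ∧
    (∀ c' l', 0 < l' → ((List.range n).map s).flatten = (List.replicate l' c').flatten →
      c.length ≤ c'.length)


/-- There is an overlap between the perfect paths `p` and `q` (`p` overlaps `q`). -/
def Overlap (p q : List E) : Prop :=
  ∃ x p' q' : List E, x ≠ [] ∧ p = p' ++ x ∧ q = x ++ q' ∧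
    M.Nonzero (p' ++ x ++ q') ∧ (p = q → p' ≠ [] ∧ q' ≠ [])

/-- An elementary perfect path: a source in the Hasse quiver of the left
divisibility order `⪯` on perfect paths, i.e. it is not a proper left divisor
of any perfect path. -/
def Elementary (p : List E) : Prop :=
  M.IsPerfect p ∧ ¬ ∃ q, M.IsPerfect q ∧ p <+: q ∧ p ≠ q

/-- A co-elementary perfect path: a sink in the Hasse quiver of `⪯`, i.e.
no proper left divisor of it is perfect. -/
def CoElementary (p : List E) : Prop :=
  M.IsPerfect p ∧ ¬ ∃ q, M.IsPerfect q ∧ q <+: p ∧ q ≠ p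

/-- There is an arrow `q ⟶ p` in the Hasse quiver of `(ℙ_Λ, ⪯)`:
`p ≺ q` and no perfect path lies strictly between them. -/
def HasseArrowPrec (q p : List E) : Prop :=
  M.IsPerfect p ∧ M.IsPerfect q ∧ p <+: q ∧ p ≠ q ∧
    ¬ ∃ r, M.IsPerfect r ∧ p <+: r ∧ p ≠ r ∧ r <+: q ∧ r ≠ q

end MonomialData

/-- Two cycles are equivalent (agree up to cyclic permutation): each is a
subpath of a power of the other. -/
def CyclesEquiv {E : Type} (c d : List E) : Prop :=
  ∃ m k, 0 < m ∧ 0 < k ∧ c <:+: (List.replicate m d).flatten ∧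
    d <:+: (List.replicate k c).flatten

/-! In a perfect pair `(a, b)` the path `ab` is itself a minimal relation; this rigidity lets
factorizations travel along perfect path sequences. If `s 0 = r · t 0` for perfect path
sequences `s` and `t`, then `s (2k) = rₖ · t (2k)` and `t (2k+1) = s (2k+1) · rₖ₊₁` for all `k`,
with `r₀ = r`, and `r₀, t 0 · s 1, r₁, t 2 · s 3, r₂, …` is again a perfect path sequence.
This proves (2); (1) reduces to it because `q = pr` forces `p' = rq'` for the successors `p'`
of `p` and `q'` of `q`. Of the two regroupings of a factorization, the second is the first one
read in the opposite algebra. -/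

namespace QuiverData

variable {V E : Type} {Q : QuiverData V E} {l m n : List E}

theorem isPath_append : Q.IsPath (l ++ m) ↔ Q.IsPath l ∧ Q.IsPath m ∧ Q.Composable l m :=
  List.isChain_append

theorem IsPath.infix (h : Q.IsPath m) (hl : l <:+: m) : Q.IsPath l :=
  List.IsChain.infix h hl

theorem IsPath.composable (h : Q.IsPath (l ++ m)) : Q.Composable l m :=
  (isPath_append.mp h).2.2

theorem IsPath.composable_of_infix (h : Q.IsPath n) (hlm : l ++ m <:+: n) : Q.Composable l m :=
  (h.infix hlm).composable

theorem composable_append_left_iff (hm : m ≠ []) :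
    Q.Composable (l ++ m) n ↔ Q.Composable m n := by
  simp only [Composable, List.getLast?_append_of_ne_nil l hm]

theorem composable_append_right_iff (hm : m ≠ []) :
    Q.Composable l (m ++ n) ↔ Q.Composable l m := by
  simp only [Composable, List.head?_append_of_ne_nil m hm]

variable (Q) in
def reverse : QuiverData V E := ⟨Q.tgt, Q.src⟩

theorem isPath_reverse_iff : Q.reverse.IsPath l ↔ Q.IsPath l.reverse :=
  (List.isChain_reverse.trans (by simp only [eq_comm]; rfl)).symm

theorem composable_reverse_iff :
    Q.reverse.Composable l m ↔ Q.Composable m.reverse l.reverse := by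
  simp only [Composable, reverse, List.getLast?_reverse, List.head?_reverse]
  exact ⟨fun h a ha b hb => (h b hb a ha).symm, fun h a ha b hb => (h b hb a ha).symm⟩

end QuiverData

namespace MonomialData

open Function

variable {V E : Type} {M : MonomialData V E} {a b c f l m p p' q q' r : List E}

theorem IsZero.mono (h : M.IsZero l) (hlm : l <:+: m) : M.IsZero m :=
  let ⟨f, hf, hfl⟩ := h
  ⟨f, hf, hfl.trans hlm⟩

theorem isZero_of_mem_F (hf : f ∈ M.F) (hfl : f <:+: l) : M.IsZero l := ⟨f, hf, hfl⟩

theorem Nonzero.infix (h : M.Nonzero m) (hlm : l <:+: m) : M.Nonzero l :=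
  ⟨h.1.infix hlm, fun hz => h.2 (hz.mono hlm)⟩

theorem nonzero_of_infix_mem_F (hf : f ∈ M.F) (hl : l <:+: f) (hlf : l.length < f.length) :
    M.Nonzero l :=
  ⟨(M.F_path f hf).infix hl, fun hz => hlf.ne (congrArg List.length (M.F_min f hf l hl hz))⟩

theorem nonzero_left_of_append_mem_F (h : l ++ m ∈ M.F) (hm : m ≠ []) : M.Nonzero l :=
  nonzero_of_infix_mem_F h List.infix_append_left (by simp [List.length_pos_iff.mpr hm])

theorem nonzero_right_of_append_mem_F (h : l ++ m ∈ M.F) (hl : l ≠ []) : M.Nonzero m :=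
  nonzero_of_infix_mem_F h List.infix_append_right (by simp [List.length_pos_iff.mpr hl])

variable (M) in
/-- The opposite algebra `Λᵒᵖ`: arrows and relations are read backwards. -/
def reverse : MonomialData V E where
  toQuiverData := M.toQuiverData.reverse
  F := {f | f.reverse ∈ M.F}
  F_path f hf := QuiverData.isPath_reverse_iff.mpr (M.F_path _ hf)
  F_len f hf := by simpa using M.F_len _ hf
  F_min f hf g hg := fun ⟨f', hf', hf'g⟩ => List.reverse_inj.mp <| M.F_min _ hf g.reverse
    (List.reverse_infix.mpr hg) ⟨f'.reverse, hf', List.reverse_infix.mpr hf'g⟩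
  admissible := by
    obtain ⟨N, hN⟩ := M.admissible
    refine ⟨N, fun l hl hlen => ?_⟩
    obtain ⟨f, hf, hfl⟩ :=
      hN l.reverse (QuiverData.isPath_reverse_iff.mp hl) (by simpa using hlen)
    exact ⟨f.reverse, by simpa using hf, by simpa using List.reverse_infix.mpr hfl⟩

theorem isZero_reverse_iff : M.reverse.IsZero l ↔ M.IsZero l.reverse :=
  ⟨fun ⟨f, hf, hfl⟩ => ⟨f.reverse, hf, List.reverse_infix.mpr hfl⟩,
    fun ⟨f, hf, hfl⟩ => ⟨f.reverse, by simpa [reverse] using hf,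
      by simpa using List.reverse_infix.mpr hfl⟩⟩

theorem composable_reverse_iff :
    M.reverse.Composable l m ↔ M.Composable m.reverse l.reverse :=
  QuiverData.composable_reverse_iff

theorem nonzero_reverse_iff : M.reverse.Nonzero l ↔ M.Nonzero l.reverse := by
  simp only [Nonzero, isZero_reverse_iff]
  exact and_congr_left' QuiverData.isPath_reverse_iff

theorem PerfectPair.reverse (h : M.PerfectPair a b) :
    M.reverse.PerfectPair b.reverse a.reverse := by
  obtain ⟨ha, hb, hanz, hbnz, hab, hz, hright, hleft⟩ := h
  refine ⟨by simpa, by simpa, ?_, ?_, ?_, ?_, fun q hq hqnz hbq hz => ?_,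
    fun p hp hpnz hpa hz => ?_⟩
  all_goals simp only [nonzero_reverse_iff, isZero_reverse_iff, composable_reverse_iff,
    List.reverse_append, List.reverse_reverse] at *
  · exact hbnz
  · exact hanz
  · exact hab
  · exact hz
  · simpa using List.reverse_prefix.mpr (hleft q.reverse (by simpa) hqnz hbq hz)
  · simpa using List.reverse_suffix.mpr (hright p.reverse (by simpa) hpnz hpa hz)

variable (M) in
theorem reverse_reverse : M.reverse.reverse = M := by
  cases M
  simp [reverse, QuiverData.reverse]

theorem PerfectPair.of_reverse (h : M.reverse.PerfectPair b.reverse a.reverse) :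
    M.PerfectPair a b := by
  simpa [reverse_reverse] using h.reverse

namespace PerfectPair

theorem ne_nil_left (h : M.PerfectPair a b) : a ≠ [] := h.1
theorem ne_nil_right (h : M.PerfectPair a b) : b ≠ [] := h.2.1
theorem nonzero_left (h : M.PerfectPair a b) : M.Nonzero a := h.2.2.1
theorem nonzero_right (h : M.PerfectPair a b) : M.Nonzero b := h.2.2.2.1
theorem composable (h : M.PerfectPair a b) : M.Composable a b := h.2.2.2.2.1
theorem isZero (h : M.PerfectPair a b) : M.IsZero (a ++ b) := h.2.2.2.2.2.1

theorem prefix_of_isZero_append (h : M.PerfectPair a b) (hq : q ≠ []) (hqnz : M.Nonzero q)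
    (haq : M.Composable a q) (hz : M.IsZero (a ++ q)) : b <+: q :=
  h.2.2.2.2.2.2.1 q hq hqnz haq hz

theorem suffix_of_isZero_append (h : M.PerfectPair a b) (hp : p ≠ []) (hpnz : M.Nonzero p)
    (hpb : M.Composable p b) (hz : M.IsZero (p ++ b)) : a <:+ p :=
  h.2.2.2.2.2.2.2 p hp hpnz hpb hz

end PerfectPair

theorem PerfectPair.append_mem_F (h : M.PerfectPair a b) : a ++ b ∈ M.F := by
  obtain ⟨-, -, hanz, hbnz, hab, ⟨f, hf, hfab⟩, hright, hleft⟩ := h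
  have hpath : M.IsPath (a ++ b) := QuiverData.isPath_append.mpr ⟨hanz.1, hbnz.1, hab⟩
  obtain hfa | hfb | ⟨a₂, b₁, ha₂, hb₁, rfl, ha₂a, hb₁b⟩ := List.infix_append_iff_ne_nil.mp hfab
  · exact absurd (isZero_of_mem_F hf hfa) hanz.2
  · exact absurd (isZero_of_mem_F hf hfb) hbnz.2
  -- `f` straddles `a ++ b`, so it meets both minimality conditions
  have hfa₂b : a₂ ++ b₁ <:+: a₂ ++ b := ((List.prefix_append_right_inj a₂).mpr hb₁b).isInfix
  have hfab₁ : a₂ ++ b₁ <:+: a ++ b₁ := (List.suffix_append_self_iff.mpr ha₂a).isInfix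
  have ha : a = a₂ := (hleft a₂ ha₂ (hanz.infix ha₂a.isInfix)
    (hpath.composable_of_infix (List.suffix_append_self_iff.mpr ha₂a).isInfix)
    (isZero_of_mem_F hf hfa₂b)).eq_of_length_le ha₂a.length_le
  have hb : b = b₁ := (hright b₁ hb₁ (hbnz.infix hb₁b.isInfix)
    (hpath.composable_of_infix ((List.prefix_append_right_inj a).mpr hb₁b).isInfix)
    (isZero_of_mem_F hf hfab₁)).eq_of_length_le hb₁b.length_le
  rwa [ha, hb]

theorem PerfectPair.left_unique (h : M.PerfectPair a b) (h' : M.PerfectPair c b) : a = c :=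
  (h.suffix_of_isZero_append h'.ne_nil_left h'.nonzero_left h'.composable
    h'.isZero).eq_of_length_le
    (h'.suffix_of_isZero_append h.ne_nil_left h.nonzero_left h.composable h.isZero).length_le

theorem PerfectPair.right_eq_append (h : M.PerfectPair p p') (h' : M.PerfectPair (p ++ r) q')
    (hr : r ≠ []) : p' = r ++ q' := by
  have hF : p ++ (r ++ q') ∈ M.F := by simpa using h'.append_mem_F
  have hnot : ¬ p' <+: r := fun hp'r => h'.nonzero_left.2
    (isZero_of_mem_F h.append_mem_F ((List.prefix_append_right_inj p).mpr hp'r).isInfix)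
  have hpre : p' <+: r ++ q' := h.prefix_of_isZero_append (by simp [hr])
    (nonzero_right_of_append_mem_F hF h.ne_nil_left) (M.F_path _ hF).composable
    (isZero_of_mem_F hF List.infix_rfl)
  obtain ⟨c, rfl⟩ : r <+: p' :=
    (List.prefix_or_prefix_of_prefix hpre (List.prefix_append r q')).resolve_left hnot
  have hc : c ≠ [] := by rintro rfl; exact hnot (by simp)
  have hcq : c <+: q' := (List.prefix_append_right_inj r).mp hpre
  have hF' : p ++ r ++ c ∈ M.F := by simpa using h.append_mem_F
  have hqc : q' <+: c := h'.prefix_of_isZero_append hc (h'.nonzero_right.infix hcq.isInfix)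
    (M.F_path _ hF').composable (isZero_of_mem_F hF' List.infix_rfl)
  rw [hcq.eq_of_length_le hqc.length_le]

theorem PerfectPair.exists_right_eq_append (h : M.PerfectPair (r ++ q) p')
    (h' : M.PerfectPair q q') (hr : r ≠ []) : ∃ r', r' ≠ [] ∧ q' = p' ++ r' := by
  obtain ⟨r', rfl⟩ : p' <+: q' := h.prefix_of_isZero_append h'.ne_nil_right h'.nonzero_right
    ((QuiverData.composable_append_left_iff h'.ne_nil_left).mpr h'.composable)
    (h'.isZero.mono (by simpa using List.infix_append_right))
  refine ⟨r', ?_, rfl⟩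
  rintro rfl
  exact hr (List.append_left_eq_self.mp (h.left_unique (by simpa using h')))

theorem PerfectPair.regroup_right (ha : M.PerfectPair a (p ++ r)) (hp : M.PerfectPair p p')
    (hq : M.PerfectPair (p ++ r) q') (hr : r ≠ []) : M.PerfectPair (a ++ p) r := by
  have hp' : p' = r ++ q' := hp.right_eq_append hq hr
  have hF : a ++ p ++ r ∈ M.F := by simpa using ha.append_mem_F
  have hap : a ++ p ≠ [] := by simp [ha.ne_nil_left]
  have hrnz : M.Nonzero r := nonzero_right_of_append_mem_F hF hap
  refine ⟨hap, hr, nonzero_left_of_append_mem_F hF hr, hrnz, (M.F_path _ hF).composable,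
    isZero_of_mem_F hF List.infix_rfl, fun r' hr' hr'nz hcomp hz => ?_,
    fun a' ha' ha'nz hcomp hz => ?_⟩
  · have hpr' : M.Composable p r' :=
      (QuiverData.composable_append_left_iff hp.ne_nil_left).mp hcomp
    by_cases hpz : M.IsZero (p ++ r')
    · exact (List.prefix_append r q').trans
        (hp' ▸ hp.prefix_of_isZero_append hr' hr'nz hpr' hpz)
    · refine (List.prefix_append_right_inj p).mp (ha.prefix_of_isZero_append (by simp [hr'])
        ⟨QuiverData.isPath_append.mpr ⟨hp.nonzero_left.1, hr'nz.1, hpr'⟩, hpz⟩ ?_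
        (by simpa using hz))
      exact (QuiverData.composable_append_right_iff hp.ne_nil_left).mpr
        ((QuiverData.composable_append_right_iff hp.ne_nil_left).mp ha.composable)
  · obtain ⟨e, rfl⟩ : p <:+ a' := hp.suffix_of_isZero_append ha' ha'nz
      (hp' ▸ (QuiverData.composable_append_right_iff hr).mpr hcomp)
      (hz.mono (by rw [hp', ← List.append_assoc]; exact List.infix_append_left))
    have he : e ≠ [] := by
      rintro rfl
      exact hq.nonzero_left.2 (by simpa using hz)
    have hpath : M.IsPath (e ++ p ++ r) := QuiverData.isPath_append.mpr ⟨ha'nz.1, hrnz.1, hcomp⟩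
    exact List.suffix_append_self_iff.mpr (ha.suffix_of_isZero_append he
      (ha'nz.infix List.infix_append_left) (hpath.composable_of_infix (by simp))
      (by simpa using hz))

theorem PerfectPair.regroup_left (hb : M.PerfectPair b (r ++ q)) (hc : M.PerfectPair c q)
    (hp : M.PerfectPair (r ++ q) p') (hr : r ≠ []) : M.PerfectPair r (q ++ p') := by
  refine PerfectPair.of_reverse ?_
  rw [List.reverse_append]
  have hp : M.reverse.PerfectPair p'.reverse (q.reverse ++ r.reverse) := by
    simpa using hp.reverse
  have hb : M.reverse.PerfectPair (q.reverse ++ r.reverse) b.reverse := by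
    simpa using hb.reverse
  exact hp.regroup_right hc.reverse hb (by simpa using hr)

theorem isPerfect_of_alternating {u v : ℕ → List E} {K : ℕ} (hK : 0 < K)
    (hu : Periodic u K) (hv : Periodic v K)
    (huv : ∀ k, M.PerfectPair (u k) (v k)) (hvu : ∀ k, M.PerfectPair (v k) (u (k + 1))) :
    M.IsPerfect (u 0) := by
  refine ⟨2 * K, fun j => if Even j then u (j / 2) else v (j / 2), by omega, by simp,
    fun j => ?_, fun j => ?_⟩
  · have hj : (j + 2 * K) / 2 = j / 2 + K := by omega
    simp only [hj, hu (j / 2), hv (j / 2), Nat.even_add, even_two_mul, iff_true]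
  · have hk₁ : ∀ k, (2 * k + 1) / 2 = k := by omega
    have hk₂ : ∀ k, (2 * k + 1 + 1) / 2 = k + 1 := by omega
    obtain ⟨k, rfl | rfl⟩ := Nat.even_or_odd' j
    · simpa [hk₁] using huv k
    · simpa [hk₁, hk₂, Nat.even_add_one] using hvu k

section Sequences

variable {s t : ℕ → List E} {n m : ℕ}

theorem perfectPair_pred (hn : 0 < n) (hs : Periodic s n)
    (hsp : ∀ i, M.PerfectPair (s i) (s (i + 1))) (i : ℕ) :
    M.PerfectPair (s (i + n - 1)) (s i) := by
  simpa [show i + n - 1 + 1 = i + n by omega, hs i] using hsp (i + n - 1)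

theorem exists_shift_of_eq_append (hsp : ∀ i, M.PerfectPair (s i) (s (i + 1)))
    (htp : ∀ i, M.PerfectPair (t i) (t (i + 1))) {i : ℕ} (h : s i = r ++ t i) (hr : r ≠ []) :
    ∃ r', r' ≠ [] ∧ t (i + 1) = s (i + 1) ++ r' ∧ s (i + 2) = r' ++ t (i + 2) := by
  obtain ⟨r', hr', ht⟩ := (h ▸ hsp i).exists_right_eq_append (htp i) hr
  exact ⟨r', hr', ht, (hsp (i + 1)).right_eq_append (ht ▸ htp (i + 1)) hr'⟩

theorem isPerfect_of_eq_append (hn : 0 < n) (hm : 0 < m) (hs : Periodic s n)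
    (ht : Periodic t m) (hsp : ∀ i, M.PerfectPair (s i) (s (i + 1)))
    (htp : ∀ i, M.PerfectPair (t i) (t (i + 1))) (h₀ : s 0 = r ++ t 0) (hr : r ≠ []) :
    M.IsPerfect r := by
  have hs₂ : Periodic s (2 * (n * m)) := by
    simpa only [Nat.cast_id, show 2 * m * n = 2 * (n * m) by ring] using hs.nat_mul (2 * m)
  have ht₂ : Periodic t (2 * (n * m)) := by
    simpa only [Nat.cast_id, show 2 * n * m = 2 * (n * m) by ring] using ht.nat_mul (2 * n)
  have key : ∀ k, ∃ x, x ≠ [] ∧ s (2 * k) = x ++ t (2 * k) := by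
    intro k
    induction k with
    | zero => exact ⟨r, hr, h₀⟩
    | succ k ih =>
      obtain ⟨x, hx, hxk⟩ := ih
      obtain ⟨r', hr', -, h₂⟩ := exists_shift_of_eq_append hsp htp hxk hx
      exact ⟨r', hr', h₂⟩
  choose R hR hsR using key
  have hmid : ∀ k, t (2 * k + 1) = s (2 * k + 1) ++ R (k + 1) := by
    intro k
    obtain ⟨r', -, h₁, h₂⟩ := exists_shift_of_eq_append hsp htp (hsR k) (hR k)
    rwa [List.append_cancel_right (h₂.symm.trans (hsR (k + 1)))] at h₁
  have hRper : Periodic R (n * m) := fun k => by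
    have h := hsR (k + n * m)
    rw [mul_add, hs₂, ht₂, hsR k] at h
    exact List.append_cancel_right h.symm
  rw [← List.append_cancel_right ((hsR 0).symm.trans h₀)]
  refine isPerfect_of_alternating (v := fun k => t (2 * k) ++ s (2 * k + 1)) (Nat.mul_pos hn hm)
    hRper (fun k => ?_) (fun k => ?_) (fun k => ?_)
  · simp only [mul_add, add_right_comm _ (2 * (n * m)), hs₂ _, ht₂ _]
  · exact (hsR k ▸ perfectPair_pred hn hs hsp (2 * k)).regroup_left
      (perfectPair_pred hm ht htp (2 * k)) (hsR k ▸ hsp (2 * k)) (hR k)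
  · exact (hmid k ▸ htp (2 * k)).regroup_right (hsp (2 * k + 1)) (hmid k ▸ htp (2 * k + 1))
      (hR (k + 1))

end Sequences

end MonomialData

/-- for perfect paths `p`, `q`: (1) if `p` is a proper left
divisor of `q`, say `q = pr` with `r` nontrivial, then `r` is perfect;
(2) if `q` is a proper right divisor of `p`, say `p = rq` with `r` nontrivial,
then `r` is perfect. -/
theorem factor_of_divisor_perfect {V E : Type} (M : MonomialData V E)
    (p q r : List E) (hp : M.IsPerfect p) (hq : M.IsPerfect q) :
    (q = p ++ r → r ≠ [] → M.IsPerfect r) ∧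
    (p = r ++ q → r ≠ [] → M.IsPerfect r) := by
  obtain ⟨n, s, hn, rfl, hs, hsp⟩ := hp
  obtain ⟨m, t, hm, rfl, ht, htp⟩ := hq
  refine ⟨fun h hr => ?_, fun h hr => M.isPerfect_of_eq_append hn hm hs ht hsp htp h hr⟩
  exact M.isPerfect_of_eq_append hn hm (Function.Periodic.add_const hs 1)
    (Function.Periodic.add_const ht 1) (fun i => hsp (i + 1)) (fun i => htp (i + 1))
    ((hsp 0).right_eq_append (h ▸ htp 0) hr) hr
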